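/- For probability measures μ, ν on R with finite first moments, W_1(μ,ν) = ∫_0^1 |Q_μ(u) − Q_ν(u)| du, where Q_μ, Q_ν are the generalized quantile functions of μ and ν. -/

import Mathlib

/-!
Writing `|x - y|` as the length of `Ici x ∆ Ici y` and applying Tonelli, the cost of any coupling
`π` of `μ` and `ν` is `∫ π ({p.1 ≤ t} ∆ {p.2 ≤ t}) dt`, and each integrand is at least
`|F_μ t - F_ν t|`. The quantile coupling, the law of `u ↦ (Q_μ u, Q_ν u)` under the uniform
distribution on `(0, 1)`, attains this bound for every `t`, because `Q u ≤ t ↔ u ≤ F t` for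
`0 < u < 1`. Hence `W₁(μ, ν) = ∫ |F_μ - F_ν|`, which is also the cost of the quantile coupling.
Finite first moments make `Q_μ` and `Q_ν` integrable, so this cost is a finite Bochner integral.
-/

open MeasureTheory Set

/-- Generalized quantile (inverse CDF): `Q_F(u) = inf {x | F x ≥ u}`. -/
noncomputable def quantile (F : ℝ → ℝ) (u : ℝ) : ℝ := sInf {x | u ≤ F x}

/-- CDF of a real random variable `X` under `P`. -/
noncomputable def cdfRV {Ω : Type*} [MeasurableSpace Ω] (P : Measure Ω) (X : Ω → ℝ) (x : ℝ) : ℝ :=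
  (P {ω | X ω ≤ x}).toReal

/-- CDF of a measure on ℝ. -/
noncomputable def cdfOf (μ : Measure ℝ) (x : ℝ) : ℝ := (μ (Iic x)).toReal

/-- Uniform distribution on (0,1). -/
noncomputable def unif : Measure ℝ := volume.restrict (Ioo 0 1)

/-- 1-Wasserstein distance on ℝ: infimum over couplings of the expected distance. -/
noncomputable def W1 (μ ν : Measure ℝ) : ENNReal :=
  ⨅ π ∈ {π : Measure (ℝ × ℝ) | π.map Prod.fst = μ ∧ π.map Prod.snd = ν},
    ∫⁻ p, ENNReal.ofReal |p.1 - p.2| ∂π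

open Filter ProbabilityTheory
open scoped symmDiff Interval

theorem StieltjesFunction.quantile_le_iff (F : StieltjesFunction ℝ) {u : ℝ}
    (h_lo : ∃ x, F x < u) (h_hi : ∃ x, u ≤ F x) (t : ℝ) :
    quantile F u ≤ t ↔ u ≤ F t := by
  set S := {x | u ≤ F x}
  have hbdd : BddBelow S := by
    obtain ⟨x, hx⟩ := h_lo
    exact ⟨x, fun s hs => le_of_not_gt fun hsx => (hs.trans (F.mono hsx.le)).not_gt hx⟩
  have hmem : sInf S ∈ S := by
    have h_right : ∀ x ∈ Ioi (sInf S), u ≤ F x := fun x hx => by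
      obtain ⟨s, hs, hsx⟩ := (csInf_lt_iff hbdd h_hi).1 hx
      exact hs.trans (F.mono hsx.le)
    exact ge_of_tendsto ((F.right_continuous _).mono Ioi_subset_Ici_self)
      (eventually_nhdsWithin_of_forall h_right)
  exact ⟨fun h => hmem.trans (F.mono h), fun h => csInf_le hbdd h⟩

section Quantile

variable (μ : Measure ℝ)

theorem cdfOf_eq_cdf [IsProbabilityMeasure μ] : cdfOf μ = cdf μ := by
  ext x
  rw [cdfOf, cdf_eq_real, measureReal_def]

-- Outside `(0, 1)` the set defining the quantile is empty or unbounded below and `sInf` returns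
-- the junk value `0`, so the quantile is only controlled `unif`-a.e.
theorem quantile_cdf_le_iff {u : ℝ} (hu : u ∈ Ioo 0 1) (t : ℝ) :
    quantile (cdf μ) u ≤ t ↔ u ≤ cdf μ t :=
  (cdf μ).quantile_le_iff ((tendsto_cdf_atBot μ).eventually (eventually_lt_nhds hu.1)).exists
    (((tendsto_cdf_atTop μ).eventually (eventually_gt_nhds hu.2)).exists.imp fun _ => le_of_lt) t

theorem monotoneOn_quantile_cdf : MonotoneOn (quantile (cdf μ)) (Ioo 0 1) :=
  fun _ hu _ hv huv =>
    (quantile_cdf_le_iff μ hu _).2 (huv.trans ((quantile_cdf_le_iff μ hv _).1 le_rfl))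

theorem aemeasurable_quantile_cdf : AEMeasurable (quantile (cdf μ)) unif :=
  aemeasurable_restrict_of_monotoneOn measurableSet_Ioo (monotoneOn_quantile_cdf μ)

theorem quantile_cdf_preimage_Iic_ae_eq (t : ℝ) :
    quantile (cdf μ) ⁻¹' Iic t =ᵐ[unif] Iic (cdf μ t) := by
  filter_upwards [ae_restrict_mem measurableSet_Ioo] with u hu
  exact propext (quantile_cdf_le_iff μ hu t)

end Quantile

instance : IsProbabilityMeasure unif :=
  ⟨by simp [unif]⟩

theorem unif_eq_restrict_Icc : unif = volume.restrict (Icc 0 1) :=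
  Measure.restrict_congr_set Ioo_ae_eq_Icc

theorem unif_Iic {a : ℝ} (ha : a ∈ Icc 0 1) : unif (Iic a) = ENNReal.ofReal a := by
  rw [unif_eq_restrict_Icc, Measure.restrict_apply measurableSet_Iic,
    inter_comm, ← Ici_inter_Iic, inter_assoc, Iic_inter_Iic, min_eq_right ha.2, Ici_inter_Iic,
    Real.volume_Icc, sub_zero]

theorem unif_uIoc {a b : ℝ} (ha : a ∈ Icc 0 1) (hb : b ∈ Icc 0 1) :
    unif (Ι a b) = ENNReal.ofReal |b - a| := by
  rw [unif_eq_restrict_Icc, Measure.restrict_apply measurableSet_uIoc,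
    inter_eq_left.2 (uIoc_subset_uIcc.trans (uIcc_subset_Icc ha hb)), Real.volume_uIoc]

theorem Set.Iic_symmDiff_Iic {α : Type*} [LinearOrder α] (a b : α) : Iic a ∆ Iic b = Ι a b := by
  rw [Set.symmDiff_def, Iic_sdiff_Iic, Iic_sdiff_Iic, uIoc_eq_union, union_comm]

theorem Real.volume_Ici_symmDiff_Ici (x y : ℝ) :
    volume (Ici x ∆ Ici y) = ENNReal.ofReal |x - y| := by
  wlog h : x ≤ y generalizing x y
  · rw [symmDiff_comm, abs_sub_comm]
    exact this y x (le_of_not_ge h)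
  rw [symmDiff_of_ge (Ici_subset_Ici.2 h), Ici_sdiff_Ici, Real.volume_Ico, abs_sub_comm,
    abs_of_nonneg (sub_nonneg.2 h)]

theorem lintegral_abs_sub_eq_lintegral_measure_symmDiff {α : Type*} [MeasurableSpace α]
    (m : Measure α) [SFinite m] {f g : α → ℝ} (hf : Measurable f) (hg : Measurable g) :
    ∫⁻ a, ENNReal.ofReal |f a - g a| ∂m = ∫⁻ t, m ((f ⁻¹' Iic t) ∆ (g ⁻¹' Iic t)) := by
  set S : Set (α × ℝ) := {q | f q.1 ≤ q.2} ∆ {q | g q.1 ≤ q.2}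
  have hS : MeasurableSet S :=
    (measurableSet_le (hf.comp measurable_fst) measurable_snd).symmDiff
      (measurableSet_le (hg.comp measurable_fst) measurable_snd)
  calc ∫⁻ a, ENNReal.ofReal |f a - g a| ∂m
      = ∫⁻ a, volume (Ici (f a) ∆ Ici (g a)) ∂m := by
        simp only [Real.volume_Ici_symmDiff_Ici]
    _ = m.prod volume S := (Measure.prod_apply hS).symm
    _ = ∫⁻ t, m ((f ⁻¹' Iic t) ∆ (g ⁻¹' Iic t)) := Measure.prod_apply_symm hS

theorem ofReal_abs_measureReal_sub_le_measure_symmDiff {α : Type*} [MeasurableSpace α]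
    (m : Measure α) [IsFiniteMeasure m] (s t : Set α) :
    ENNReal.ofReal |m.real s - m.real t| ≤ m (s ∆ t) := by
  wlog h : m.real t ≤ m.real s generalizing s t
  · rw [abs_sub_comm, symmDiff_comm]
    exact this t s (le_of_not_ge h)
  rw [abs_of_nonneg (sub_nonneg.2 h), ENNReal.ofReal_sub _ measureReal_nonneg,
    ofReal_measureReal, ofReal_measureReal]
  exact le_measure_symmDiff

theorem lintegral_abs_cdf_sub_le_of_map_fst_of_map_snd {μ ν : Measure ℝ} [IsProbabilityMeasure μ]
    [IsProbabilityMeasure ν] {π : Measure (ℝ × ℝ)} (hfst : π.map Prod.fst = μ)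
    (hsnd : π.map Prod.snd = ν) :
    ∫⁻ t, ENNReal.ofReal |cdf μ t - cdf ν t| ≤ ∫⁻ p, ENNReal.ofReal |p.1 - p.2| ∂π := by
  have : IsProbabilityMeasure π :=
    (Measure.isProbabilityMeasure_map_iff measurable_fst.aemeasurable).1 (hfst ▸ inferInstance)
  rw [lintegral_abs_sub_eq_lintegral_measure_symmDiff π measurable_fst measurable_snd]
  refine lintegral_mono fun t => ?_
  rw [cdf_eq_real, cdf_eq_real, ← hfst, ← hsnd,
    map_measureReal_apply measurable_fst measurableSet_Iic,
    map_measureReal_apply measurable_snd measurableSet_Iic]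
  exact ofReal_abs_measureReal_sub_le_measure_symmDiff π _ _

theorem map_quantile_cdf_unif (μ : Measure ℝ) [IsProbabilityMeasure μ] :
    unif.map (quantile (cdf μ)) = μ := by
  have := Measure.isProbabilityMeasure_map (μ := unif) (aemeasurable_quantile_cdf μ)
  refine Measure.ext_of_Iic _ _ fun t => ?_
  rw [Measure.map_apply_of_aemeasurable (aemeasurable_quantile_cdf μ) measurableSet_Iic,
    measure_congr (quantile_cdf_preimage_Iic_ae_eq μ t), unif_Iic ⟨cdf_nonneg μ t, cdf_le_one μ t⟩,
    ofReal_cdf]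

theorem integrable_quantile_cdf {μ : Measure ℝ} [IsProbabilityMeasure μ] (hμ : Integrable id μ) :
    Integrable (quantile (cdf μ)) unif := by
  rw [← map_quantile_cdf_unif μ] at hμ
  exact (integrable_map_measure aestronglyMeasurable_id (aemeasurable_quantile_cdf μ)).1 hμ

noncomputable def quantileCoupling (μ ν : Measure ℝ) : Measure (ℝ × ℝ) :=
  unif.map fun u => (quantile (cdf μ) u, quantile (cdf ν) u)

section QuantileCoupling

variable (μ ν : Measure ℝ)

theorem aemeasurable_quantile_cdf_prod :
    AEMeasurable (fun u => (quantile (cdf μ) u, quantile (cdf ν) u)) unif :=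
  (aemeasurable_quantile_cdf μ).prodMk (aemeasurable_quantile_cdf ν)

instance : IsProbabilityMeasure (quantileCoupling μ ν) :=
  Measure.isProbabilityMeasure_map (aemeasurable_quantile_cdf_prod μ ν)

theorem quantileCoupling_map_fst [IsProbabilityMeasure μ] :
    (quantileCoupling μ ν).map Prod.fst = μ := by
  rw [quantileCoupling, AEMeasurable.map_map_of_aemeasurable measurable_fst.aemeasurable
    (aemeasurable_quantile_cdf_prod μ ν)]
  exact map_quantile_cdf_unif μ

theorem quantileCoupling_map_snd [IsProbabilityMeasure ν] :
    (quantileCoupling μ ν).map Prod.snd = ν := by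
  rw [quantileCoupling, AEMeasurable.map_map_of_aemeasurable measurable_snd.aemeasurable
    (aemeasurable_quantile_cdf_prod μ ν)]
  exact map_quantile_cdf_unif ν

theorem quantileCoupling_symmDiff_preimage_Iic (t : ℝ) :
    quantileCoupling μ ν ((Prod.fst ⁻¹' Iic t) ∆ (Prod.snd ⁻¹' Iic t)) =
      ENNReal.ofReal |cdf μ t - cdf ν t| := by
  rw [quantileCoupling, Measure.map_apply_of_aemeasurable (aemeasurable_quantile_cdf_prod μ ν)
      ((measurable_fst measurableSet_Iic).symmDiff (measurable_snd measurableSet_Iic)),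
    preimage_symmDiff]
  refine (measure_congr ((quantile_cdf_preimage_Iic_ae_eq μ t).symmDiff
    (quantile_cdf_preimage_Iic_ae_eq ν t))).trans ?_
  rw [Iic_symmDiff_Iic,
    unif_uIoc ⟨cdf_nonneg μ t, cdf_le_one μ t⟩ ⟨cdf_nonneg ν t, cdf_le_one ν t⟩, abs_sub_comm]

theorem lintegral_quantileCoupling_eq_lintegral_abs_cdf_sub :
    ∫⁻ p, ENNReal.ofReal |p.1 - p.2| ∂quantileCoupling μ ν =
      ∫⁻ t, ENNReal.ofReal |cdf μ t - cdf ν t| := by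
  simp only [lintegral_abs_sub_eq_lintegral_measure_symmDiff _ measurable_fst measurable_snd,
    quantileCoupling_symmDiff_preimage_Iic]

theorem lintegral_quantileCoupling :
    ∫⁻ p, ENNReal.ofReal |p.1 - p.2| ∂quantileCoupling μ ν =
      ∫⁻ u, ENNReal.ofReal |quantile (cdf μ) u - quantile (cdf ν) u| ∂unif :=
  lintegral_map' (by fun_prop : Measurable _).aemeasurable (aemeasurable_quantile_cdf_prod μ ν)

end QuantileCoupling

theorem W1_eq_lintegral_abs_cdf_sub (μ ν : Measure ℝ) [IsProbabilityMeasure μ]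
    [IsProbabilityMeasure ν] : W1 μ ν = ∫⁻ t, ENNReal.ofReal |cdf μ t - cdf ν t| :=
  le_antisymm
    ((iInf₂_le (quantileCoupling μ ν)
      ⟨quantileCoupling_map_fst μ ν, quantileCoupling_map_snd μ ν⟩).trans_eq
      (lintegral_quantileCoupling_eq_lintegral_abs_cdf_sub μ ν))
    (le_iInf₂ fun _ hπ => lintegral_abs_cdf_sub_le_of_map_fst_of_map_snd hπ.1 hπ.2)

theorem W1_eq_quantile_integral (μ ν : Measure ℝ)
    [IsProbabilityMeasure μ] [IsProbabilityMeasure ν]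
    (hμ : Integrable id μ) (hν : Integrable id ν) :
    W1 μ ν = ENNReal.ofReal (∫ u in Ioo (0:ℝ) 1, |quantile (cdfOf μ) u - quantile (cdfOf ν) u|) := by
  have h_int : Integrable (fun u => |quantile (cdf μ) u - quantile (cdf ν) u|) unif :=
    ((integrable_quantile_cdf hμ).sub (integrable_quantile_cdf hν)).abs
  rw [cdfOf_eq_cdf μ, cdfOf_eq_cdf ν, W1_eq_lintegral_abs_cdf_sub,
    ← lintegral_quantileCoupling_eq_lintegral_abs_cdf_sub, lintegral_quantileCoupling,
    ← ofReal_integral_eq_lintegral_ofReal h_int (ae_of_all _ fun _ => abs_nonneg _)]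
  rfl
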